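/- Let x = P(x) be a quadratic MPS in n variables with rational coefficients of total encoding size |P| bits and least fixed point q* > 0. Then q*_min ≥ 2^{−|P|(2^n − 1)}, where q*_min is the smallest coordinate of q*. -/

import Mathlib

/-!
Let `S` be a proper set of variables. If no equation `x_i = P_i(x)` with `i ∉ S` had a
monomial in the variables of `S` only, then `q*` with its coordinates outside `S` set to `0`
would be a point `r ≥ 0` with `P(r) ≤ r`; by Knaster–Tarski on `[0, r]` the least fixed point
lies below `r`, contradicting `q* > 0`. So the variables can be added one at a time, each new
one bounded below by a coefficient `≥ 2^(-s)` times a product of at most two earlier bounds.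
Starting from `S = ∅`, the `k`-th bound is `2^(-s(2^k - 1))`.
-/

open Matrix MvPolynomial

/-- Evaluation of a vector of multivariate polynomials. -/
noncomputable def evalVec {n : ℕ} (P : Fin n → MvPolynomial (Fin n) ℝ) (x : Fin n → ℝ) :
    Fin n → ℝ := fun i => MvPolynomial.eval x (P i)

open Finset

theorem exists_fixedPoint_mem_Icc {α : Type*} [ConditionallyCompleteLattice α] {F : α → α}
    {a b : α} (hab : a ≤ b) (hF : MonotoneOn F (Set.Icc a b)) (ha : a ≤ F a) (hb : F b ≤ b) :
    ∃ x ∈ Set.Icc a b, F x = x := by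
  have : Fact (a ≤ b) := ⟨hab⟩
  have hmaps : ∀ x ∈ Set.Icc a b, F x ∈ Set.Icc a b := fun x hx =>
    ⟨ha.trans (hF ⟨le_rfl, hab⟩ hx hx.1), (hF hx ⟨hab, le_rfl⟩ hx.2).trans hb⟩
  let f : Set.Icc a b →o Set.Icc a b :=
    ⟨fun x => ⟨F x, hmaps x x.2⟩, fun x y hxy => hF x.2 y.2 hxy⟩
  exact ⟨f.lfp, f.lfp.2, congrArg Subtype.val f.map_lfp⟩

section NonnegCoeffs

variable {σ : Type*} {p : MvPolynomial σ ℝ} {x y : σ → ℝ}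

theorem eval_nonneg_of_coeff_nonneg (hp : ∀ m, 0 ≤ p.coeff m) (hx : 0 ≤ x) :
    0 ≤ eval x p := by
  rw [eval_eq]
  exact sum_nonneg fun m _ => mul_nonneg (hp m) (prod_nonneg fun j _ => pow_nonneg (hx j) _)

theorem eval_mono_of_coeff_nonneg (hp : ∀ m, 0 ≤ p.coeff m) (hx : 0 ≤ x) (hxy : x ≤ y) :
    eval x p ≤ eval y p := by
  rw [eval_eq, eval_eq]
  refine sum_le_sum fun m _ => mul_le_mul_of_nonneg_left ?_ (hp m)
  exact prod_le_prod (fun j _ => pow_nonneg (hx j) _) fun j _ => pow_le_pow_left₀ (hx j) (hxy j) _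

theorem coeff_mul_prod_le_eval (hp : ∀ m, 0 ≤ p.coeff m) (hx : 0 ≤ x)
    {m : σ →₀ ℕ} (hm : m ∈ p.support) :
    p.coeff m * ∏ j ∈ m.support, x j ^ m j ≤ eval x p := by
  rw [eval_eq]
  exact single_le_sum (f := fun d => p.coeff d * ∏ j ∈ d.support, x j ^ d j)
    (fun d _ => mul_nonneg (hp d) (prod_nonneg fun j _ => pow_nonneg (hx j) _)) hm

theorem mul_pow_le_eval {d : ℕ} (hdeg : p.totalDegree ≤ d) (hp : ∀ m, 0 ≤ p.coeff m)
    (hx : 0 ≤ x) {m : σ →₀ ℕ} (hm : m ∈ p.support) {b c : ℝ} (hb₀ : 0 ≤ b) (hb₁ : b ≤ 1)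
    (hbx : ∀ j ∈ m.support, b ≤ x j) (hc : c ≤ p.coeff m) :
    c * b ^ d ≤ eval x p := by
  have hprod : b ^ d ≤ ∏ j ∈ m.support, x j ^ m j :=
    calc b ^ d ≤ b ^ (m.sum fun _ e => e) :=
          pow_le_pow_of_le_one hb₀ hb₁ ((le_totalDegree hm).trans hdeg)
      _ = ∏ j ∈ m.support, b ^ m j := by rw [Finsupp.sum, prod_pow_eq_pow_sum]
      _ ≤ ∏ j ∈ m.support, x j ^ m j := by gcongr with j hj; exact hbx j hj
  calc c * b ^ d ≤ p.coeff m * ∏ j ∈ m.support, x j ^ m j :=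
        mul_le_mul hc hprod (pow_nonneg hb₀ d) (hp m)
    _ ≤ eval x p := coeff_mul_prod_le_eval hp hx hm

end NonnegCoeffs

section MPS

variable {n : ℕ} {P : Fin n → MvPolynomial (Fin n) ℝ} {q : Fin n → ℝ}

theorem le_of_evalVec_le (hpos : ∀ i m, 0 ≤ (P i).coeff m)
    (hleast : ∀ r : Fin n → ℝ, 0 ≤ r → evalVec P r = r → q ≤ r)
    {r : Fin n → ℝ} (hr : 0 ≤ r) (hPr : evalVec P r ≤ r) : q ≤ r := by
  obtain ⟨x, ⟨hx, hxr⟩, hPx⟩ := exists_fixedPoint_mem_Icc (F := evalVec P) hr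
    (fun _ hx _ _ hxy i => eval_mono_of_coeff_nonneg (hpos i) hx.1 hxy)
    (fun i => eval_nonneg_of_coeff_nonneg (hpos i) le_rfl) hPr
  exact (hleast x hx hPx).trans hxr

theorem exists_notMem_exists_mem_support_subset (hpos : ∀ i m, 0 ≤ (P i).coeff m)
    (hq : ∀ i, 0 < q i) (hfix : evalVec P q = q)
    (hleast : ∀ r : Fin n → ℝ, 0 ≤ r → evalVec P r = r → q ≤ r)
    {S : Finset (Fin n)} (hS : S ≠ univ) :
    ∃ i ∉ S, ∃ m ∈ (P i).support, m.support ⊆ S := by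
  by_contra! hout
  have hq₀ : 0 ≤ q := fun j => (hq j).le
  set r : Fin n → ℝ := S.piecewise q 0 with hr_def
  have hr : 0 ≤ r := le_piecewise_of_le_of_le _ hq₀ le_rfl
  have hPr : evalVec P r ≤ r := by
    intro i
    by_cases hi : i ∈ S
    · calc evalVec P r i ≤ evalVec P q i :=
            eval_mono_of_coeff_nonneg (hpos i) hr (piecewise_le_of_le_of_le _ le_rfl hq₀)
        _ = r i := by rw [hfix, hr_def, piecewise_eq_of_mem _ _ _ hi]
    · refine le_of_eq ?_
      rw [hr_def, piecewise_eq_of_notMem _ _ _ hi, evalVec, eval_eq]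
      refine sum_eq_zero fun m hm => ?_
      obtain ⟨j, hjm, hjS⟩ := not_subset.mp (hout i hi m hm)
      rw [prod_eq_zero hjm (by simp [hjS, Finsupp.mem_support_iff.mp hjm]), mul_zero]
  obtain ⟨i, hi⟩ : ∃ i, i ∉ S := by simpa [eq_univ_iff_forall] using hS
  have := le_of_evalVec_le hpos hleast hr hPr i
  simp only [r, piecewise_eq_of_notMem _ _ _ hi, Pi.zero_apply] at this
  exact (hq i).not_ge this

theorem exists_card_eq_forall_two_zpow_le (hdeg : ∀ i, (P i).totalDegree ≤ 2)
    (hpos : ∀ i m, 0 ≤ (P i).coeff m) {s : ℕ}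
    (hsize : ∀ i m, (P i).coeff m ≠ 0 → (2 : ℝ) ^ (-(s : ℤ)) ≤ (P i).coeff m)
    (hq : ∀ i, 0 < q i) (hfix : evalVec P q = q)
    (hleast : ∀ r : Fin n → ℝ, 0 ≤ r → evalVec P r = r → q ≤ r) {k : ℕ} (hk : k ≤ n) :
    ∃ S : Finset (Fin n), S.card = k ∧ ∀ i ∈ S, (2 : ℝ) ^ (-((s : ℤ) * (2 ^ k - 1))) ≤ q i := by
  induction k with
  | zero => exact ⟨∅, by simp, by simp⟩
  | succ k ih =>
    obtain ⟨S, hcard, hS⟩ := ih (by omega)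
    have hSu : S ≠ univ := fun h => by simp [h] at hcard; omega
    obtain ⟨i, hiS, m, hm, hmS⟩ :=
      exists_notMem_exists_mem_support_subset hpos hq hfix hleast hSu
    have hpow : (1 : ℤ) ≤ 2 ^ k := one_le_pow₀ one_le_two
    have hstep :
        (2 : ℝ) ^ (-((s : ℤ) * (2 ^ (k + 1) - 1))) ≤ (2 : ℝ) ^ (-((s : ℤ) * (2 ^ k - 1))) :=
      zpow_le_zpow_right₀ one_le_two (by gcongr <;> norm_num)
    have hqi : (2 : ℝ) ^ (-((s : ℤ) * (2 ^ (k + 1) - 1))) ≤ q i := by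
      have hsq : (2 : ℝ) ^ (-((s : ℤ) * (2 ^ (k + 1) - 1)))
          = (2 : ℝ) ^ (-(s : ℤ)) * ((2 : ℝ) ^ (-((s : ℤ) * (2 ^ k - 1)))) ^ 2 := by
        rw [← zpow_natCast, ← _root_.zpow_mul, ← zpow_add₀ two_ne_zero]
        congr 1
        push_cast
        ring
      rw [hsq, ← congrFun hfix i]
      exact mul_pow_le_eval (hdeg i) (hpos i) (fun j => (hq j).le) hm (by positivity)
        (zpow_le_one_of_nonpos₀ one_le_two (by nlinarith)) (fun j hj => hS j (hmS hj))
        (hsize i m (MvPolynomial.mem_support_iff.mp hm))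
    refine ⟨insert i S, by rw [card_insert_of_notMem hiS, hcard], fun j hj => ?_⟩
    rcases mem_insert.mp hj with rfl | hjS
    · exact hqi
    · exact hstep.trans (hS j hjS)

end MPS

theorem stmt9_general {n : ℕ} (P : Fin n → MvPolynomial (Fin n) ℝ)
    (hdeg : ∀ i, (P i).totalDegree ≤ 2)
    (hpos : ∀ i m, 0 ≤ (P i).coeff m)
    (s : ℕ)
    (hsize : ∀ i m, (P i).coeff m ≠ 0 → (2 : ℝ) ^ (-(s : ℤ)) ≤ (P i).coeff m)
    (q : Fin n → ℝ) (hq : ∀ i, 0 < q i) (hfix : evalVec P q = q)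
    (hleast : ∀ r : Fin n → ℝ, 0 ≤ r → evalVec P r = r → q ≤ r) :
    ∀ i, (2 : ℝ) ^ (-((s : ℤ) * (2 ^ n - 1))) ≤ q i := by
  obtain ⟨S, hcard, hS⟩ :=
    exists_card_eq_forall_two_zpow_le hdeg hpos hsize hq hfix hleast le_rfl
  have hSu : S = univ := eq_univ_of_card S (by simpa using hcard)
  exact fun i => hS i (hSu ▸ mem_univ i)

/-- A quadratic MPS with rational coefficients of total encoding size `s` bits
(in particular every positive coefficient is at least 2^(-s)) and LFP q* > 0 has
q*_min ≥ 2^(-s·(2^n - 1)). -/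
theorem stmt9 {n : ℕ} (P : Fin n → MvPolynomial (Fin n) ℝ)
    (hdeg : ∀ i, (P i).totalDegree ≤ 2)
    (hpos : ∀ i m, 0 ≤ (P i).coeff m)
    (hrat : ∀ i m, ∃ r : ℚ, (P i).coeff m = (r : ℝ))
    (s : ℕ) (hs : 0 < s)
    (hsize : ∀ i m, (P i).coeff m ≠ 0 → (2 : ℝ) ^ (-(s : ℤ)) ≤ (P i).coeff m)
    (q : Fin n → ℝ) (hq : ∀ i, 0 < q i) (hfix : evalVec P q = q)
    (hleast : ∀ r : Fin n → ℝ, 0 ≤ r → evalVec P r = r → q ≤ r) :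
    ∀ i, (2 : ℝ) ^ (-((s : ℤ) * (2 ^ n - 1))) ≤ q i :=
  stmt9_general P hdeg hpos s hsize q hq hfix hleast
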